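/- For threshold u ∈ (0,1), let k = (π₀/(1-π₀))·((1-u)/u)·e^{λ/2}. If k ≤ 1, then ψ(x) < u for all x > 0; if k > 1, then ψ(x) < u if and only if x > (1/λ)·[ln(k + √(k² - 1))]². -/

import Mathlib

open Real

/-!
Clearing denominators, `ψ x < u` is equivalent to `k < cosh √(λ x)`. Since `cosh > 1` away from `0`,
this always holds when `k ≤ 1`; when `k > 1`, monotonicity of `cosh` on `[0, ∞)` turns it into
`arcosh k < √(λ x)`, where `arcosh k` is by definition `log (k + √(k² - 1))`.
-/

theorem div_add_mul_lt_iff {p a u c : ℝ} (hp : 0 < p) (ha : 0 < a) (hu : 0 < u) (hc : 0 ≤ c) :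
    p / (p + a * c) < u ↔ p * (1 - u) / (u * a) < c := by
  rw [div_lt_iff₀ (by positivity), div_lt_iff₀ (by positivity)]
  constructor <;> intro h <;> linarith

theorem lt_cosh_sqrt_mul_iff {k l x : ℝ} (hk : 1 ≤ k) (hl : 0 < l) :
    k < cosh √(l * x) ↔ 1 / l * arcosh k ^ 2 < x := by
  rw [← cosh_arcosh hk, cosh_lt_cosh, abs_of_nonneg (arcosh_nonneg hk), abs_of_nonneg (sqrt_nonneg _),
    lt_sqrt (arcosh_nonneg hk), one_div, inv_mul_lt_iff₀ hl, cosh_arcosh hk]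

theorem lt_cosh_sqrt_mul_of_le_one {k l x : ℝ} (hk : k ≤ 1) (hl : 0 < l) (hx : 0 < x) :
    k < cosh √(l * x) :=
  hk.trans_lt (one_lt_cosh.mpr (sqrt_pos.mpr (mul_pos hl hx)).ne')

theorem lfdr_threshold (p0 l u : ℝ) (hp0 : p0 ∈ Set.Ioo (0:ℝ) 1) (hl : 0 < l)
    (hu : u ∈ Set.Ioo (0:ℝ) 1) :
    let ψ : ℝ → ℝ := fun x =>
      p0 / (p0 + (1 - p0) * Real.exp (-l / 2) * Real.cosh (Real.sqrt (l * x)))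
    let k : ℝ := (p0 / (1 - p0)) * ((1 - u) / u) * Real.exp (l / 2)
    (k ≤ 1 → ∀ x : ℝ, 0 < x → ψ x < u) ∧
    (1 < k → ∀ x : ℝ, 0 < x →
      (ψ x < u ↔ x > (1 / l) * (Real.log (k + Real.sqrt (k ^ 2 - 1))) ^ 2)) := by
  intro ψ k
  obtain ⟨hp0, hp1⟩ := hp0
  have hq : 0 < 1 - p0 := sub_pos.mpr hp1
  have hk : p0 * (1 - u) / (u * ((1 - p0) * exp (-l / 2))) = k := by
    simp only [k, neg_div, exp_neg]
    field_simp [hq.ne']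
  have key (x : ℝ) : ψ x < u ↔ k < cosh √(l * x) :=
    hk ▸ div_add_mul_lt_iff hp0 (mul_pos hq (exp_pos _)) hu.1 (cosh_pos _).le
  exact ⟨fun hk1 x hx => (key x).mpr (lt_cosh_sqrt_mul_of_le_one hk1 hl hx),
    fun hk1 x _ => (key x).trans (lt_cosh_sqrt_mul_iff hk1.le hl)⟩
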